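/- arXiv:2211.14368 — 2 statements merged into one kernel-verified Lean document; each statement's English description precedes it below -/
import Mathlib

section
/- For nonzero polynomials a, b ∈ ℂ[s], the monic generator of the ideal ⟨a(s), b(t)⟩ ∩ ℂ[s+t] equals the star operation a * b, i.e., the monic polynomial with roots {ρ + σ : ρ root of a, σ root of b} where the multiplicity of γ is max{ m_ρ(a) + m_σ(b) − 1 : ρ + σ = γ }. -/
section Aux

open MvPolynomial

lemma finsupp_pair_eq {l k i j : ℕ} (h : Finsupp.single (0:Fin 2) l + Finsupp.single (1:Fin 2) k
    = Finsupp.single (0:Fin 2) i + Finsupp.single (1:Fin 2) j) : l = i ∧ k = j := by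
  constructor
  · have := DFunLike.congr_fun h 0
    simpa using this
  · have := DFunLike.congr_fun h 1
    simpa using this

lemma coeff_add_pow' (K i j : ℕ) :
    MvPolynomial.coeff (Finsupp.single 0 i + Finsupp.single 1 j)
      ((X 0 + X 1 : MvPolynomial (Fin 2) ℂ) ^ K)
    = if i + j = K then (K.choose i : ℂ) else 0 := by
  rw [add_pow, MvPolynomial.coeff_sum]
  have hterm : ∀ l ∈ Finset.range (K+1),
      MvPolynomial.coeff (Finsupp.single 0 i + Finsupp.single 1 j)
        ((X 0:MvPolynomial (Fin 2) ℂ)^l * (X 1)^(K-l) * (K.choose l : MvPolynomial (Fin 2) ℂ))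
      = if l = i ∧ K - l = j then (K.choose l : ℂ) else 0 := by
    intro l _
    have hc : ((K.choose l : ℕ) : MvPolynomial (Fin 2) ℂ)
        = MvPolynomial.monomial 0 ((K.choose l : ℕ) : ℂ) := by
      rw [← MvPolynomial.C_apply]; norm_cast
    rw [hc, X_pow_eq_monomial, X_pow_eq_monomial, monomial_mul, monomial_mul,
      MvPolynomial.coeff_monomial]
    simp only [mul_one, one_mul, add_zero]
    by_cases h : l = i ∧ K - l = j
    · obtain ⟨rfl, rfl⟩ := h
      rw [if_pos rfl, if_pos ⟨rfl, rfl⟩]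
    · rw [if_neg, if_neg h]
      intro hh
      exact h (finsupp_pair_eq hh)
  rw [Finset.sum_congr rfl hterm]
  by_cases hK : i + j = K
  · rw [if_pos hK, Finset.sum_eq_single i]
    · have : i ≤ K := by omega
      rw [if_pos ⟨rfl, by omega⟩]
    · intro l hl hne
      rw [if_neg]
      rintro ⟨rfl, -⟩; exact hne rfl
    · intro hi
      exfalso; exact hi (Finset.mem_range.2 (by omega))
  · rw [if_neg hK]
    apply Finset.sum_eq_zero
    intro l hl
    rw [if_neg]
    rintro ⟨rfl, rfl⟩
    have := Finset.mem_range.1 hl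
    exact hK (by omega)

lemma mem_span_pow_iff (m n : ℕ) (hm : 1 ≤ m) (hn : 1 ≤ n) (p : Polynomial ℂ) :
    Polynomial.aeval (X 0 + X 1 : MvPolynomial (Fin 2) ℂ) p ∈
      Ideal.span ({(X 0:MvPolynomial (Fin 2) ℂ)^m, (X 1:MvPolynomial (Fin 2) ℂ)^n} :
        Set (MvPolynomial (Fin 2) ℂ))
    ↔ (Polynomial.X : Polynomial ℂ)^(m+n-1) ∣ p := by
  constructor
  · intro h
    obtain ⟨f, g, hfg⟩ := Ideal.mem_span_pair.1 h
    rw [Polynomial.X_pow_dvd_iff]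
    intro k hk
    set i := min k (m-1) with hi
    set j := k - i with hj
    have hij : i + j = k := by omega
    have him : i < m := by omega
    have hjn : j < n := by omega
    set μ : Fin 2 →₀ ℕ := Finsupp.single 0 i + Finsupp.single 1 j with hμ
    have hL : MvPolynomial.coeff μ (Polynomial.aeval (X 0 + X 1 : MvPolynomial (Fin 2) ℂ) p)
        = p.coeff k * (k.choose i : ℂ) := by
      rw [Polynomial.aeval_eq_sum_range, MvPolynomial.coeff_sum]
      simp only [MvPolynomial.coeff_smul, hμ, coeff_add_pow', smul_eq_mul]
      by_cases hdeg : k < p.natDegree + 1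
      · rw [Finset.sum_eq_single k]
        · rw [if_pos hij]
        · intro l hl hne
          rw [if_neg (by omega), mul_zero]
        · intro hcon; exact absurd (Finset.mem_range.2 hdeg) hcon
      · rw [Finset.sum_eq_zero, Polynomial.coeff_eq_zero_of_natDegree_lt (by omega), zero_mul]
        intro l hl
        have := Finset.mem_range.1 hl
        rw [if_neg (by omega), mul_zero]
    have hR : MvPolynomial.coeff μ (f * (X 0:MvPolynomial (Fin 2) ℂ)^m + g * (X 1)^n) = 0 := by
      rw [MvPolynomial.coeff_add, X_pow_eq_monomial, X_pow_eq_monomial,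
        MvPolynomial.coeff_mul_monomial', MvPolynomial.coeff_mul_monomial']
      rw [if_neg, if_neg, add_zero]
      · rw [Finsupp.single_le_iff]
        simp [hμ, Finsupp.single_apply]
        omega
      · rw [Finsupp.single_le_iff]
        simp [hμ, Finsupp.single_apply]
        omega
    rw [hfg] at hR
    rw [hL] at hR
    have hch : (k.choose i : ℂ) ≠ 0 :=
      Nat.cast_ne_zero.2 (Nat.choose_pos (by omega)).ne'
    exact (mul_eq_zero.1 hR).resolve_right hch
  · rintro ⟨q, rfl⟩
    rw [map_mul]
    apply Ideal.mul_mem_right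
    rw [map_pow, Polynomial.aeval_X, add_pow]
    apply Ideal.sum_mem
    intro l hl
    have hl' := Finset.mem_range.1 hl
    by_cases hml : m ≤ l
    · have : (X 0:MvPolynomial (Fin 2) ℂ)^l * (X 1)^(m+n-1-l) * ((m+n-1).choose l : MvPolynomial (Fin 2) ℂ)
          = ((X 0)^(l-m) * (X 1)^(m+n-1-l) * ((m+n-1).choose l : MvPolynomial (Fin 2) ℂ)) * (X 0)^m := by
        rw [show l = m + (l - m) by omega, pow_add]; ring_nf; simp
      rw [this]
      exact Ideal.mul_mem_left _ _ (Ideal.subset_span (by simp))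
    · have : (X 0:MvPolynomial (Fin 2) ℂ)^l * (X 1)^(m+n-1-l) * ((m+n-1).choose l : MvPolynomial (Fin 2) ℂ)
          = ((X 0)^l * (X 1)^(m+n-1-l-n) * ((m+n-1).choose l : MvPolynomial (Fin 2) ℂ)) * (X 1)^n := by
        rw [show m+n-1-l = n + (m+n-1-l-n) by omega, pow_add]; ring_nf; simp
      rw [this]
      exact Ideal.mul_mem_left _ _ (Ideal.subset_span (by simp))

noncomputable def shiftE (v : Fin 2 → ℂ) :
    MvPolynomial (Fin 2) ℂ ≃ₐ[ℂ] MvPolynomial (Fin 2) ℂ :=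
  AlgEquiv.ofAlgHom (aeval fun i => X i + C (v i)) (aeval fun i => X i - C (v i))
    (by ext i : 1; simp) (by ext i : 1; simp)

lemma shiftE_X (v : Fin 2 → ℂ) (i : Fin 2) : shiftE v (X i) = X i + C (v i) := by simp [shiftE]
lemma shiftE_C (v : Fin 2 → ℂ) (c : ℂ) : shiftE v (C c) = C c := by simp [shiftE]

lemma equiv_span_pair {R S : Type*} [CommRing R] [CommRing S] (e : R ≃+* S) (u w x : R) :
    x ∈ Ideal.span ({u, w} : Set R) ↔ e x ∈ Ideal.span ({e u, e w} : Set S) := by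
  rw [Ideal.mem_span_pair, Ideal.mem_span_pair]
  constructor
  · rintro ⟨f, g, rfl⟩
    exact ⟨e f, e g, by simp [map_add, map_mul]⟩
  · rintro ⟨f, g, hfg⟩
    refine ⟨e.symm f, e.symm g, ?_⟩
    apply e.injective
    simp only [map_add, map_mul, RingEquiv.apply_symm_apply, hfg]

lemma comp_dvd_iff (γ : ℂ) (K : ℕ) (p : Polynomial ℂ) :
    (Polynomial.X - Polynomial.C γ)^K ∣ p ↔
      (Polynomial.X : Polynomial ℂ)^K ∣ p.comp (Polynomial.X + Polynomial.C γ) := by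
  constructor
  · rintro ⟨q, rfl⟩
    refine ⟨q.comp (Polynomial.X + Polynomial.C γ), ?_⟩
    rw [Polynomial.mul_comp, Polynomial.pow_comp, Polynomial.sub_comp, Polynomial.X_comp,
      Polynomial.C_comp]
    ring_nf
  · rintro ⟨q, hq⟩
    refine ⟨q.comp (Polynomial.X - Polynomial.C γ), ?_⟩
    have := congrArg (fun r => Polynomial.comp r (Polynomial.X - Polynomial.C γ)) hq
    simp only [Polynomial.comp_assoc, Polynomial.mul_comp, Polynomial.pow_comp,
      Polynomial.X_comp, Polynomial.add_comp, Polynomial.C_comp, sub_add_cancel,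
      Polynomial.comp_X] at this
    rw [this]

lemma pair_lemma (c d : ℂ) (m n : ℕ) (hm : 1 ≤ m) (hn : 1 ≤ n) (p : Polynomial ℂ) :
    Polynomial.aeval (X 0 + X 1 : MvPolynomial (Fin 2) ℂ) p ∈
      Ideal.span ({(X 0 - C c)^m, (X 1 - C d)^n} : Set (MvPolynomial (Fin 2) ℂ))
    ↔ (Polynomial.X - Polynomial.C (c+d))^(m+n-1) ∣ p := by
  set v : Fin 2 → ℂ := ![c, d] with hv
  set e := (shiftE v).toRingEquiv with he
  rw [equiv_span_pair e]
  have h1 : e ((X 0 - C c)^m) = (X 0:MvPolynomial (Fin 2) ℂ)^m := by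
    simp [he, map_pow, map_sub, shiftE_X, shiftE_C, hv]
  have h2 : e ((X 1 - C d)^n) = (X 1:MvPolynomial (Fin 2) ℂ)^n := by
    simp [he, map_pow, map_sub, shiftE_X, shiftE_C, hv]
  have h3 : e (Polynomial.aeval (X 0 + X 1 : MvPolynomial (Fin 2) ℂ) p)
      = Polynomial.aeval (X 0 + X 1 : MvPolynomial (Fin 2) ℂ)
          (p.comp (Polynomial.X + Polynomial.C (c+d))) := by
    have h4 : e (Polynomial.aeval (X 0 + X 1 : MvPolynomial (Fin 2) ℂ) p)
        = Polynomial.aeval (shiftE v (X 0 + X 1)) p :=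
      (Polynomial.aeval_algHom_apply (shiftE v).toAlgHom _ _).symm
    rw [h4, Polynomial.aeval_comp]
    congr 1
    simp only [map_add, shiftE_X, hv, Polynomial.aeval_X, Polynomial.aeval_add,
      Polynomial.aeval_C, MvPolynomial.algebraMap_eq, C_add, Matrix.cons_val_zero,
      Matrix.cons_val_one, Matrix.head_cons]
    ring
  rw [h1, h2, h3, mem_span_pow_iff m n hm hn, ← comp_dvd_iff]

end Aux

section Part

open Polynomial

lemma exists_partition (a : Polynomial ℂ) (ha : a ≠ 0) :
    ∃ u : ℂ → Polynomial ℂ,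
      (∀ ρ ∈ a.roots.toFinset, a ∣ u ρ * (X - C ρ)^(a.rootMultiplicity ρ)) ∧
      a ∣ (∑ ρ ∈ a.roots.toFinset, u ρ) - 1 := by
  classical
  set R := a.roots.toFinset with hR
  set m : ℂ → ℕ := fun ρ => a.rootMultiplicity ρ with hm
  have hsplits : a.roots.card = a.natDegree :=
    (Polynomial.splits_iff_card_roots).1 (IsAlgClosed.splits a)
  have hfact : C a.leadingCoeff * ∏ ρ ∈ R, (X - C ρ)^(m ρ) = a := by
    rw [hR, ← Polynomial.prod_multiset_root_eq_finset_root]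
    exact Polynomial.C_leadingCoeff_mul_prod_multiset_X_sub_C hsplits
  have hlc : a.leadingCoeff ≠ 0 := Polynomial.leadingCoeff_ne_zero.2 ha
  set A : ℂ → Polynomial ℂ := fun ρ => C a.leadingCoeff * ∏ ρ' ∈ R.erase ρ, (X - C ρ')^(m ρ') with hA
  have hfactρ : ∀ ρ ∈ R, a = (X - C ρ)^(m ρ) * A ρ := by
    intro ρ hρ
    rw [hA]
    conv_lhs => rw [← hfact]
    rw [← Finset.mul_prod_erase R _ hρ]
    ring
  have hAeval : ∀ ρ ∈ R, (A ρ).eval ρ ≠ 0 := by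
    intro ρ hρ
    rw [hA]
    simp only [eval_mul, eval_C, eval_prod, eval_pow, eval_sub, eval_X]
    apply mul_ne_zero hlc
    apply Finset.prod_ne_zero_iff.2
    intro ρ' hρ'
    have : ρ' ≠ ρ := Finset.ne_of_mem_erase hρ'
    exact pow_ne_zero _ (sub_ne_zero.2 (Ne.symm this))
  have hcop : ∀ ρ ∈ R, IsCoprime ((X - C ρ)^(m ρ)) (A ρ) := by
    intro ρ hρ
    apply IsCoprime.pow_left
    rw [(Polynomial.irreducible_X_sub_C ρ).coprime_iff_not_dvd]
    rw [Polynomial.dvd_iff_isRoot]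
    exact fun h => hAeval ρ hρ h
  have H : ∀ ρ : ℂ, ∃ uρ : Polynomial ℂ, ρ ∈ R →
      (a ∣ uρ * (X - C ρ)^(m ρ)) ∧
      (∀ ρ' ∈ R, ρ' ≠ ρ → (X - C ρ')^(m ρ') ∣ uρ) ∧
      ((X - C ρ)^(m ρ) ∣ uρ - 1) := by
    intro ρ
    by_cases hρ : ρ ∈ R
    · obtain ⟨x, y, hxy⟩ := hcop ρ hρ
      refine ⟨y * A ρ, fun _ => ⟨?_, ?_, ?_⟩⟩
      · refine ⟨y, ?_⟩
        rw [hfactρ ρ hρ]; ring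
      · intro ρ' hρ' hne'
        have : (X - C ρ')^(m ρ') ∣ A ρ := by
          rw [hA]
          exact Dvd.dvd.mul_left (Finset.dvd_prod_of_mem _ (Finset.mem_erase.2 ⟨hne', hρ'⟩)) _
        exact this.mul_left y
      · refine ⟨-x, ?_⟩
        have : y * A ρ - 1 = -(x * (X - C ρ)^(m ρ)) := by
          rw [← hxy]; ring
        rw [this]; ring
    · exact ⟨0, fun h => absurd h hρ⟩
  choose u hu using H
  refine ⟨u, fun ρ hρ => (hu ρ hρ).1, ?_⟩
  have hprod : (∏ ρ ∈ R, (X - C ρ)^(m ρ)) ∣ (∑ ρ ∈ R, u ρ) - 1 := by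
    apply Finset.prod_dvd_of_coprime
    · intro ρ hρ ρ' hρ' hne'
      exact (Polynomial.pairwise_coprime_X_sub_C Function.injective_id hne').pow
    · intro ρ hρ
      have hsum : (∑ ρ' ∈ R, u ρ') - 1 = (u ρ - 1) + ∑ ρ' ∈ R.erase ρ, u ρ' := by
        rw [← Finset.add_sum_erase R u hρ]; ring
      rw [hsum]
      apply dvd_add ((hu ρ hρ).2.2)
      apply Finset.dvd_sum
      intro ρ' hρ'
      exact (hu ρ' (Finset.mem_of_mem_erase hρ')).2.1 ρ hρ
        (Ne.symm (Finset.mem_erase.1 hρ').1)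
  obtain ⟨w, hw⟩ := hprod
  set lc := a.leadingCoeff with hlcdef
  refine ⟨C lc⁻¹ * w, ?_⟩
  rw [hw]
  have h2 : (∏ ρ ∈ R, (X - C ρ) ^ m ρ) = C lc⁻¹ * a := by
    conv_rhs => rw [← hfact]
    rw [← mul_assoc, ← C_mul, inv_mul_cancel₀ hlc, C_1, one_mul]
  rw [h2]; ring

end Part

open Polynomial in
open scoped Classical in
/-- The star operation: the monic polynomial whose roots are the pairwise sums of roots
of `a` and `b`, where the multiplicity of `γ` is
`max { rootMultiplicity ρ a + rootMultiplicity σ b - 1 : ρ + σ = γ }`.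
If `a` or `b` has no roots (e.g. is a nonzero constant), the product is empty and
`pstar a b = 1`. -/
noncomputable def pstar (a b : Polynomial ℂ) : Polynomial ℂ :=
  ∏ γ ∈ (a.roots.toFinset ×ˢ b.roots.toFinset).image (fun p => p.1 + p.2),
    (X - C γ) ^
      (((a.roots.toFinset ×ˢ b.roots.toFinset).filter (fun p => p.1 + p.2 = γ)).sup
        (fun p => a.rootMultiplicity p.1 + b.rootMultiplicity p.2 - 1))

open Polynomial in
open scoped Classical in
lemma pstar_dvd_iff (a b p : Polynomial ℂ) :
    pstar a b ∣ p ↔ ∀ q ∈ a.roots.toFinset ×ˢ b.roots.toFinset,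
      (X - C (q.1 + q.2))^(a.rootMultiplicity q.1 + b.rootMultiplicity q.2 - 1) ∣ p := by
  constructor
  · intro h q hq
    have hγ : q.1 + q.2 ∈ (a.roots.toFinset ×ˢ b.roots.toFinset).image (fun p => p.1 + p.2) :=
      Finset.mem_image_of_mem _ hq
    have hle : a.rootMultiplicity q.1 + b.rootMultiplicity q.2 - 1 ≤
        ((a.roots.toFinset ×ˢ b.roots.toFinset).filter (fun p => p.1 + p.2 = q.1 + q.2)).sup
          (fun p => a.rootMultiplicity p.1 + b.rootMultiplicity p.2 - 1) :=
      Finset.le_sup (s := (a.roots.toFinset ×ˢ b.roots.toFinset).filter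
          (fun p => p.1 + p.2 = q.1 + q.2))
        (f := fun p => a.rootMultiplicity p.1 + b.rootMultiplicity p.2 - 1)
        (Finset.mem_filter.2 ⟨hq, rfl⟩)
    calc (X - C (q.1 + q.2))^(a.rootMultiplicity q.1 + b.rootMultiplicity q.2 - 1)
        ∣ (X - C (q.1 + q.2)) ^
          (((a.roots.toFinset ×ˢ b.roots.toFinset).filter (fun p => p.1 + p.2 = q.1 + q.2)).sup
            (fun p => a.rootMultiplicity p.1 + b.rootMultiplicity p.2 - 1)) :=
          pow_dvd_pow _ hle
      _ ∣ pstar a b := Finset.dvd_prod_of_mem _ hγ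
      _ ∣ p := h
  · intro h
    rw [pstar]
    apply Finset.prod_dvd_of_coprime
    · intro γ hγ γ' hγ' hne
      exact (Polynomial.pairwise_coprime_X_sub_C Function.injective_id hne).pow
    · intro γ hγ
      obtain ⟨q, hq, hqγ⟩ := Finset.mem_image.1 hγ
      have hfil : ((a.roots.toFinset ×ˢ b.roots.toFinset).filter
          (fun p => p.1 + p.2 = γ)).Nonempty := ⟨q, Finset.mem_filter.2 ⟨hq, hqγ⟩⟩
      obtain ⟨q0, hq0, hsup⟩ := Finset.exists_mem_eq_sup _ hfil
        (fun p => a.rootMultiplicity p.1 + b.rootMultiplicity p.2 - 1)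
      rw [hsup]
      have hq0' := Finset.mem_filter.1 hq0
      rw [← hq0'.2]
      exact h q0 hq0'.1

open MvPolynomial in
lemma aeval_X_sub_C_pow (i : Fin 2) (c : ℂ) (k : ℕ) :
    Polynomial.aeval (X i : MvPolynomial (Fin 2) ℂ) ((Polynomial.X - Polynomial.C c)^k)
      = (X i - C c)^k := by
  rw [map_pow, map_sub, Polynomial.aeval_X, Polynomial.aeval_C, MvPolynomial.algebraMap_eq]

open MvPolynomial in
/-- For nonzero `a, b ∈ ℂ[s]`, the monic generator of
`⟨a(s), b(t)⟩ ∩ ℂ[s+t]` equals the star operation `a * b`: an element `p(s+t)` of the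
subring `ℂ[s+t]` lies in the ideal `⟨a(s), b(t)⟩` of `ℂ[s,t]` iff `(a * b) ∣ p`. -/
theorem stmt6 (a b : Polynomial ℂ) (ha : a ≠ 0) (hb : b ≠ 0) (p : Polynomial ℂ) :
    Polynomial.aeval (X 0 + X 1 : MvPolynomial (Fin 2) ℂ) p ∈
      Ideal.span ({Polynomial.aeval (X 0 : MvPolynomial (Fin 2) ℂ) a,
        Polynomial.aeval (X 1 : MvPolynomial (Fin 2) ℂ) b} : Set (MvPolynomial (Fin 2) ℂ))
      ↔ pstar a b ∣ p := by

  classical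
  set I : Ideal (MvPolynomial (Fin 2) ℂ) :=
    Ideal.span ({Polynomial.aeval (X 0 : MvPolynomial (Fin 2) ℂ) a,
        Polynomial.aeval (X 1 : MvPolynomial (Fin 2) ℂ) b} : Set (MvPolynomial (Fin 2) ℂ)) with hI
  -- multiplicities are positive on roots
  have hma : ∀ ρ ∈ a.roots.toFinset, 1 ≤ a.rootMultiplicity ρ := by
    intro ρ hρ
    rw [Nat.one_le_iff_ne_zero, ← Nat.pos_iff_ne_zero, Polynomial.rootMultiplicity_pos ha]
    exact Polynomial.isRoot_of_mem_roots (Multiset.mem_toFinset.1 hρ)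
  have hmb : ∀ σ ∈ b.roots.toFinset, 1 ≤ b.rootMultiplicity σ := by
    intro σ hσ
    rw [Nat.one_le_iff_ne_zero, ← Nat.pos_iff_ne_zero, Polynomial.rootMultiplicity_pos hb]
    exact Polynomial.isRoot_of_mem_roots (Multiset.mem_toFinset.1 hσ)
  -- the pair ideals
  have hIleJ : ∀ q ∈ a.roots.toFinset ×ˢ b.roots.toFinset,
      I ≤ Ideal.span ({(X 0 - C q.1)^(a.rootMultiplicity q.1),
        (X 1 - C q.2)^(b.rootMultiplicity q.2)} : Set (MvPolynomial (Fin 2) ℂ)) := by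
    rintro ⟨ρ, σ⟩ hq
    rw [hI, Ideal.span_le]
    rintro x hx
    rcases hx with rfl | rfl
    · obtain ⟨a', ha'⟩ := Polynomial.pow_rootMultiplicity_dvd a ρ
      have heq : Polynomial.aeval (X 0 : MvPolynomial (Fin 2) ℂ) a
          = (X 0 - C ρ)^(a.rootMultiplicity ρ) *
            Polynomial.aeval (X 0 : MvPolynomial (Fin 2) ℂ) a' := by
        rw [← aeval_X_sub_C_pow, ← map_mul, ← ha']
      rw [heq]
      exact Ideal.mul_mem_right _ _ (Ideal.subset_span (Set.mem_insert _ _))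
    · obtain ⟨b', hb'⟩ := Polynomial.pow_rootMultiplicity_dvd b σ
      have heq : Polynomial.aeval (X 1 : MvPolynomial (Fin 2) ℂ) b
          = (X 1 - C σ)^(b.rootMultiplicity σ) *
            Polynomial.aeval (X 1 : MvPolynomial (Fin 2) ℂ) b' := by
        rw [← aeval_X_sub_C_pow, ← map_mul, ← hb']
      rw [heq]
      exact Ideal.mul_mem_right _ _
        (Ideal.subset_span (Set.mem_insert_of_mem _ (Set.mem_singleton _)))
  constructor
  · -- membership implies pstar ∣ p
    intro hmem
    rw [pstar_dvd_iff]
    rintro ⟨ρ, σ⟩ hq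
    have h1 := (Finset.mem_product.1 hq).1
    have h2 := (Finset.mem_product.1 hq).2
    exact (pair_lemma ρ σ _ _ (hma ρ h1) (hmb σ h2) p).1 (hIleJ ⟨ρ, σ⟩ hq hmem)
  · -- pstar ∣ p implies membership
    intro hdvd
    have hpair : ∀ q ∈ a.roots.toFinset ×ˢ b.roots.toFinset,
        Polynomial.aeval (X 0 + X 1 : MvPolynomial (Fin 2) ℂ) p ∈
          Ideal.span ({(X 0 - C q.1)^(a.rootMultiplicity q.1),
            (X 1 - C q.2)^(b.rootMultiplicity q.2)} : Set (MvPolynomial (Fin 2) ℂ)) := by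
      rintro ⟨ρ, σ⟩ hq
      have h1 := (Finset.mem_product.1 hq).1
      have h2 := (Finset.mem_product.1 hq).2
      exact (pair_lemma ρ σ _ _ (hma ρ h1) (hmb σ h2) p).2
        ((pstar_dvd_iff a b p).1 hdvd ⟨ρ, σ⟩ hq)
    obtain ⟨u, hu1, hu2⟩ := exists_partition a ha
    obtain ⟨v, hv1, hv2⟩ := exists_partition b hb
    set P := Polynomial.aeval (X 0 + X 1 : MvPolynomial (Fin 2) ℂ) p with hP
    set S := ∑ ρ ∈ a.roots.toFinset, Polynomial.aeval (X 0 : MvPolynomial (Fin 2) ℂ) (u ρ) with hS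
    set T := ∑ σ ∈ b.roots.toFinset, Polynomial.aeval (X 1 : MvPolynomial (Fin 2) ℂ) (v σ) with hT
    have haI : Polynomial.aeval (X 0 : MvPolynomial (Fin 2) ℂ) a ∈ I :=
      Ideal.subset_span (Set.mem_insert _ _)
    have hbI : Polynomial.aeval (X 1 : MvPolynomial (Fin 2) ℂ) b ∈ I :=
      Ideal.subset_span (Set.mem_insert_of_mem _ (Set.mem_singleton _))
    -- P * S * T ∈ I
    have hPST : P * S * T ∈ I := by
      have hexp : P * S * T = ∑ ρ ∈ a.roots.toFinset, ∑ σ ∈ b.roots.toFinset,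
          P * Polynomial.aeval (X 0 : MvPolynomial (Fin 2) ℂ) (u ρ) *
            Polynomial.aeval (X 1 : MvPolynomial (Fin 2) ℂ) (v σ) := by
        rw [hS, hT, mul_assoc, Finset.sum_mul_sum, Finset.mul_sum]
        refine Finset.sum_congr rfl fun ρ _ => ?_
        rw [Finset.mul_sum]
        exact Finset.sum_congr rfl fun σ _ => by ring
      rw [hexp]
      apply Ideal.sum_mem
      rintro ρ hρ
      apply Ideal.sum_mem
      rintro σ hσ
      -- term : P * aeval X0 (u ρ) * aeval X1 (v σ)
      have hq : (ρ, σ) ∈ a.roots.toFinset ×ˢ b.roots.toFinset :=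
        Finset.mem_product.2 ⟨hρ, hσ⟩
      obtain ⟨f, g, hfg⟩ := Ideal.mem_span_pair.1 (hpair (ρ, σ) hq)
      obtain ⟨wa, hwa⟩ := hu1 ρ hρ
      obtain ⟨wb, hwb⟩ := hv1 σ hσ
      have e1 : Polynomial.aeval (X 0 : MvPolynomial (Fin 2) ℂ) (u ρ) *
            (X 0 - C ρ)^(a.rootMultiplicity ρ)
          = Polynomial.aeval (X 0 : MvPolynomial (Fin 2) ℂ) a *
            Polynomial.aeval (X 0 : MvPolynomial (Fin 2) ℂ) wa := by
        rw [← aeval_X_sub_C_pow 0, ← map_mul, hwa, map_mul]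
      have e2 : Polynomial.aeval (X 1 : MvPolynomial (Fin 2) ℂ) (v σ) *
            (X 1 - C σ)^(b.rootMultiplicity σ)
          = Polynomial.aeval (X 1 : MvPolynomial (Fin 2) ℂ) b *
            Polynomial.aeval (X 1 : MvPolynomial (Fin 2) ℂ) wb := by
        rw [← aeval_X_sub_C_pow 1, ← map_mul, hwb, map_mul]
      have expand : P * Polynomial.aeval (X 0 : MvPolynomial (Fin 2) ℂ) (u ρ) *
            Polynomial.aeval (X 1 : MvPolynomial (Fin 2) ℂ) (v σ)
          = (f * Polynomial.aeval (X 1 : MvPolynomial (Fin 2) ℂ) (v σ) *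
              Polynomial.aeval (X 0 : MvPolynomial (Fin 2) ℂ) wa) *
              Polynomial.aeval (X 0 : MvPolynomial (Fin 2) ℂ) a
            + (g * Polynomial.aeval (X 0 : MvPolynomial (Fin 2) ℂ) (u ρ) *
              Polynomial.aeval (X 1 : MvPolynomial (Fin 2) ℂ) wb) *
              Polynomial.aeval (X 1 : MvPolynomial (Fin 2) ℂ) b := by
        rw [← hfg]
        calc (f * (X 0 - C ρ)^(a.rootMultiplicity ρ) + g * (X 1 - C σ)^(b.rootMultiplicity σ)) *
              Polynomial.aeval (X 0 : MvPolynomial (Fin 2) ℂ) (u ρ) *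
              Polynomial.aeval (X 1 : MvPolynomial (Fin 2) ℂ) (v σ)
            = (f * Polynomial.aeval (X 1 : MvPolynomial (Fin 2) ℂ) (v σ)) *
                (Polynomial.aeval (X 0 : MvPolynomial (Fin 2) ℂ) (u ρ) *
                  (X 0 - C ρ)^(a.rootMultiplicity ρ))
              + (g * Polynomial.aeval (X 0 : MvPolynomial (Fin 2) ℂ) (u ρ)) *
                (Polynomial.aeval (X 1 : MvPolynomial (Fin 2) ℂ) (v σ) *
                  (X 1 - C σ)^(b.rootMultiplicity σ)) := by ring
          _ = _ := by rw [e1, e2]; ring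
      rw [expand]
      exact Ideal.add_mem _ (Ideal.mul_mem_left _ _ haI) (Ideal.mul_mem_left _ _ hbI)
    -- S - 1 ∈ I and T - 1 ∈ I
    have hS1 : S - 1 ∈ I := by
      obtain ⟨wa, hwa⟩ := hu2
      have : S - 1 = Polynomial.aeval (X 0 : MvPolynomial (Fin 2) ℂ) a *
          Polynomial.aeval (X 0 : MvPolynomial (Fin 2) ℂ) wa := by
        rw [hS, ← map_mul, ← hwa, map_sub, map_sum, map_one]
      rw [this]
      exact Ideal.mul_mem_right _ _ haI
    have hT1 : T - 1 ∈ I := by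
      obtain ⟨wb, hwb⟩ := hv2
      have : T - 1 = Polynomial.aeval (X 1 : MvPolynomial (Fin 2) ℂ) b *
          Polynomial.aeval (X 1 : MvPolynomial (Fin 2) ℂ) wb := by
        rw [hT, ← map_mul, ← hwb, map_sub, map_sum, map_one]
      rw [this]
      exact Ideal.mul_mem_right _ _ hbI
    have : P = P * S * T - (P * S) * (T - 1) - P * (S - 1) := by ring
    rw [this]
    exact Ideal.sub_mem _ (Ideal.sub_mem _ hPST (Ideal.mul_mem_left _ _ hT1))
      (Ideal.mul_mem_left _ _ hS1)
end

section
/- The star operation on nonzero polynomials over ℂ is commutative and associative: a * b = b * a and (a * b) * c = a * (b * c) for all nonzero a, b, c ∈ ℂ[s]. -/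
section Aux

open Polynomial
open scoped Classical

noncomputable def S2 (a b : Polynomial ℂ) : Finset ℂ :=
  (a.roots.toFinset ×ˢ b.roots.toFinset).image (fun p => p.1 + p.2)

noncomputable def M2 (a b : Polynomial ℂ) (γ : ℂ) : ℕ :=
  ((a.roots.toFinset ×ˢ b.roots.toFinset).filter (fun p => p.1 + p.2 = γ)).sup
    (fun p => a.rootMultiplicity p.1 + b.rootMultiplicity p.2 - 1)

lemma pstar_eq (a b : Polynomial ℂ) :
    pstar a b = ∏ γ ∈ S2 a b, (X - C γ) ^ M2 a b γ := rfl

lemma monic_pstar (a b : Polynomial ℂ) : (pstar a b).Monic := by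
  rw [pstar_eq]
  exact monic_prod_of_monic _ _ fun γ _ => (monic_X_sub_C γ).pow _

lemma pstar_ne_zero (a b : Polynomial ℂ) : pstar a b ≠ 0 := (monic_pstar a b).ne_zero

lemma mem_S2 {a b : Polynomial ℂ} {γ : ℂ} :
    γ ∈ S2 a b ↔ ∃ ρ σ, ρ ∈ a.roots.toFinset ∧ σ ∈ b.roots.toFinset ∧ ρ + σ = γ := by
  simp only [S2, Finset.mem_image, Finset.mem_product, Prod.exists]
  tauto

lemma one_le_mult {a : Polynomial ℂ} (ha : a ≠ 0) {ρ : ℂ} (h : ρ ∈ a.roots.toFinset) :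
    1 ≤ a.rootMultiplicity ρ := by
  rw [Multiset.mem_toFinset, mem_roots ha] at h
  exact (rootMultiplicity_pos ha).mpr h

lemma le_M2 {a b : Polynomial ℂ} {ρ σ γ : ℂ} (h1 : ρ ∈ a.roots.toFinset)
    (h2 : σ ∈ b.roots.toFinset) (hsum : ρ + σ = γ) :
    a.rootMultiplicity ρ + b.rootMultiplicity σ - 1 ≤ M2 a b γ := by
  unfold M2
  have := Finset.le_sup
    (f := fun p : ℂ × ℂ => a.rootMultiplicity p.1 + b.rootMultiplicity p.2 - 1)
    (s := (a.roots.toFinset ×ˢ b.roots.toFinset).filter (fun p => p.1 + p.2 = γ))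
    (b := (ρ, σ))
    (Finset.mem_filter.mpr ⟨Finset.mem_product.mpr ⟨h1, h2⟩, hsum⟩)
  exact this

lemma M2_eq_zero_of_not_mem {a b : Polynomial ℂ} {γ : ℂ} (h : γ ∉ S2 a b) :
    M2 a b γ = 0 := by
  unfold M2
  rw [Finset.filter_eq_empty_iff.mpr, Finset.sup_empty]
  · rfl
  · rintro ⟨ρ, σ⟩ hp hc
    rw [Finset.mem_product] at hp
    exact h (mem_S2.mpr ⟨ρ, σ, hp.1, hp.2, hc⟩)

lemma rootMultiplicity_pstar (a b : Polynomial ℂ) (γ : ℂ) :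
    rootMultiplicity γ (pstar a b) = M2 a b γ := by
  have h0 : pstar a b ≠ 0 := pstar_ne_zero a b
  rw [← Polynomial.count_roots, pstar_eq] at *
  rw [Polynomial.roots_prod _ _ (by rwa [← pstar_eq])]
  simp only [roots_pow, roots_X_sub_C]
  rw [Multiset.count_bind]
  have : ∀ δ ∈ (S2 a b).val, Multiset.count γ (M2 a b δ • ({δ} : Multiset ℂ)) =
      if δ = γ then M2 a b δ else 0 := by
    intro δ _
    rw [Multiset.count_nsmul, Multiset.count_singleton]
    rcases eq_or_ne δ γ with rfl | h
    · simp
    · rw [if_neg h.symm, if_neg h, Nat.mul_zero]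
  rw [Multiset.map_congr rfl this]
  by_cases hmem : γ ∈ S2 a b
  · rw [show ((S2 a b).val.map fun δ => if δ = γ then M2 a b δ else 0).sum =
        ∑ δ ∈ S2 a b, if δ = γ then M2 a b δ else 0 from rfl,
      Finset.sum_ite_eq' (S2 a b) γ (fun δ => M2 a b δ), if_pos hmem]
  · rw [show ((S2 a b).val.map fun δ => if δ = γ then M2 a b δ else 0).sum =
        ∑ δ ∈ S2 a b, if δ = γ then M2 a b δ else 0 from rfl,
      Finset.sum_ite_eq' (S2 a b) γ (fun δ => M2 a b δ), if_neg hmem,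
      M2_eq_zero_of_not_mem hmem]

lemma one_le_M2 {a b : Polynomial ℂ} (ha : a ≠ 0) (hb : b ≠ 0) {γ : ℂ}
    (h : γ ∈ S2 a b) : 1 ≤ M2 a b γ := by
  obtain ⟨ρ, σ, h1, h2, h3⟩ := mem_S2.mp h
  have := one_le_mult ha h1
  have := one_le_mult hb h2
  have := le_M2 h1 h2 h3
  omega

lemma toFinset_roots_pstar {a b : Polynomial ℂ} (ha : a ≠ 0) (hb : b ≠ 0) :
    (pstar a b).roots.toFinset = S2 a b := by
  ext γ
  rw [Multiset.mem_toFinset, ← Multiset.count_pos, Polynomial.count_roots,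
    rootMultiplicity_pstar]
  constructor
  · intro h
    by_contra hc
    rw [M2_eq_zero_of_not_mem hc] at h
    omega
  · intro h
    exact lt_of_lt_of_le Nat.zero_lt_one (one_le_M2 ha hb h)

lemma S2_comm (a b : Polynomial ℂ) : S2 a b = S2 b a := by
  ext γ
  rw [mem_S2, mem_S2]
  constructor <;> rintro ⟨ρ, σ, h1, h2, h3⟩ <;>
    exact ⟨σ, ρ, h2, h1, by rw [add_comm]; exact h3⟩

lemma M2_comm (a b : Polynomial ℂ) (γ : ℂ) : M2 a b γ = M2 b a γ := by
  unfold M2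
  apply le_antisymm <;>
  · apply Finset.sup_le
    rintro ⟨ρ, σ⟩ hm
    simp only [Finset.mem_filter, Finset.mem_product] at hm
    refine le_trans (le_of_eq (by rw [add_comm])) (Finset.le_sup (b := (σ, ρ)) ?_)
    simp only [Finset.mem_filter, Finset.mem_product]
    exact ⟨⟨hm.1.2, hm.1.1⟩, by rw [add_comm]; exact hm.2⟩

noncomputable def S3 (a b c : Polynomial ℂ) : Finset ℂ :=
  ((a.roots.toFinset ×ˢ b.roots.toFinset) ×ˢ c.roots.toFinset).image
    (fun p => p.1.1 + p.1.2 + p.2)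

noncomputable def M3 (a b c : Polynomial ℂ) (γ : ℂ) : ℕ :=
  (((a.roots.toFinset ×ˢ b.roots.toFinset) ×ˢ c.roots.toFinset).filter
      (fun p => p.1.1 + p.1.2 + p.2 = γ)).sup
    (fun p => a.rootMultiplicity p.1.1 + b.rootMultiplicity p.1.2 +
      c.rootMultiplicity p.2 - 2)

lemma le_M3 {a b c : Polynomial ℂ} {ρ σ τ γ : ℂ} (h1 : ρ ∈ a.roots.toFinset)
    (h2 : σ ∈ b.roots.toFinset) (h3 : τ ∈ c.roots.toFinset) (hsum : ρ + σ + τ = γ) :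
    a.rootMultiplicity ρ + b.rootMultiplicity σ + c.rootMultiplicity τ - 2 ≤
      M3 a b c γ := by
  unfold M3
  have := Finset.le_sup
    (f := fun p : (ℂ × ℂ) × ℂ => a.rootMultiplicity p.1.1 + b.rootMultiplicity p.1.2 +
      c.rootMultiplicity p.2 - 2)
    (s := ((a.roots.toFinset ×ˢ b.roots.toFinset) ×ˢ c.roots.toFinset).filter
      (fun p => p.1.1 + p.1.2 + p.2 = γ))
    (b := ((ρ, σ), τ))
    (Finset.mem_filter.mpr ⟨Finset.mem_product.mpr
      ⟨Finset.mem_product.mpr ⟨h1, h2⟩, h3⟩, hsum⟩)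
  exact this

lemma S2_pstar_left {a b c : Polynomial ℂ} (ha : a ≠ 0) (hb : b ≠ 0) :
    S2 (pstar a b) c = S3 a b c := by
  ext γ
  rw [mem_S2]
  simp only [toFinset_roots_pstar ha hb, S3, Finset.mem_image, Finset.mem_product,
    Prod.exists]
  constructor
  · rintro ⟨δ, τ, hδ, hτ, rfl⟩
    obtain ⟨ρ, σ, h1, h2, rfl⟩ := mem_S2.mp hδ
    exact ⟨ρ, σ, τ, ⟨⟨h1, h2⟩, hτ⟩, rfl⟩
  · rintro ⟨ρ, σ, τ, ⟨⟨h1, h2⟩, h3⟩, rfl⟩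
    exact ⟨ρ + σ, τ, mem_S2.mpr ⟨ρ, σ, h1, h2, rfl⟩, h3, rfl⟩

lemma S2_pstar_right {a b c : Polynomial ℂ} (hb : b ≠ 0) (hc : c ≠ 0) :
    S2 a (pstar b c) = S3 a b c := by
  ext γ
  rw [mem_S2]
  simp only [toFinset_roots_pstar hb hc, S3, Finset.mem_image, Finset.mem_product,
    Prod.exists]
  constructor
  · rintro ⟨ρ, δ, hρ, hδ, rfl⟩
    obtain ⟨σ, τ, h1, h2, rfl⟩ := mem_S2.mp hδ
    exact ⟨ρ, σ, τ, ⟨⟨hρ, h1⟩, h2⟩, by rw [add_assoc]⟩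
  · rintro ⟨ρ, σ, τ, ⟨⟨h1, h2⟩, h3⟩, rfl⟩
    exact ⟨ρ, σ + τ, h1, mem_S2.mpr ⟨σ, τ, h2, h3, rfl⟩, by rw [add_assoc]⟩

lemma M2_pstar_left {a b c : Polynomial ℂ} (ha : a ≠ 0) (hb : b ≠ 0) (hc : c ≠ 0)
    (γ : ℂ) : M2 (pstar a b) c γ = M3 a b c γ := by
  apply le_antisymm
  · apply Finset.sup_le
    rintro ⟨δ, τ⟩ hm
    simp only [Finset.mem_filter, Finset.mem_product,
      toFinset_roots_pstar ha hb] at hm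
    obtain ⟨⟨hδ, hτ⟩, hsum⟩ := hm
    have hne : ((a.roots.toFinset ×ˢ b.roots.toFinset).filter
        (fun p => p.1 + p.2 = δ)).Nonempty := by
      obtain ⟨ρ, σ, h1, h2, h3⟩ := mem_S2.mp hδ
      exact ⟨(ρ, σ), Finset.mem_filter.mpr ⟨Finset.mem_product.mpr ⟨h1, h2⟩, h3⟩⟩
    obtain ⟨⟨ρ, σ⟩, hpm, hval⟩ := Finset.exists_mem_eq_sup _ hne
      (fun p : ℂ × ℂ => a.rootMultiplicity p.1 + b.rootMultiplicity p.2 - 1)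
    rw [Finset.mem_filter, Finset.mem_product] at hpm
    have h1 := one_le_mult ha hpm.1.1
    have h2 := one_le_mult hb hpm.1.2
    have h3 := one_le_mult hc hτ
    have hv : M2 a b δ = a.rootMultiplicity ρ + b.rootMultiplicity σ - 1 := hval
    have hle := le_M3 hpm.1.1 hpm.1.2 hτ (γ := γ)
      (by rw [show (ρ, σ).1 + (ρ, σ).2 = δ from hpm.2]; exact hsum)
    rw [rootMultiplicity_pstar]
    dsimp only at *;
    omega
  · apply Finset.sup_le
    rintro ⟨⟨ρ, σ⟩, τ⟩ hm
    rw [Finset.mem_filter, Finset.mem_product] at hm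
    obtain ⟨⟨hab, h3⟩, hsum⟩ := hm
    rw [Finset.mem_product] at hab
    have m1 := one_le_mult ha hab.1
    have m2 := one_le_mult hb hab.2
    have m3 := one_le_mult hc h3
    have hM := le_M2 hab.1 hab.2 (rfl : (ρ, σ).1 + (ρ, σ).2 = ρ + σ)
    have hle := le_M2 (a := pstar a b)
      (ρ := ρ + σ) (σ := τ) (γ := γ)
      (by rw [toFinset_roots_pstar ha hb]
          exact mem_S2.mpr ⟨ρ, σ, hab.1, hab.2, rfl⟩)
      h3 hsum
    rw [rootMultiplicity_pstar] at hle
    dsimp only at *;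
    omega

lemma M2_pstar_right {a b c : Polynomial ℂ} (ha : a ≠ 0) (hb : b ≠ 0) (hc : c ≠ 0)
    (γ : ℂ) : M2 a (pstar b c) γ = M3 a b c γ := by
  apply le_antisymm
  · apply Finset.sup_le
    rintro ⟨ρ, δ⟩ hm
    simp only [Finset.mem_filter, Finset.mem_product,
      toFinset_roots_pstar hb hc] at hm
    obtain ⟨⟨hρ, hδ⟩, hsum⟩ := hm
    have hne : ((b.roots.toFinset ×ˢ c.roots.toFinset).filter
        (fun p => p.1 + p.2 = δ)).Nonempty := by
      obtain ⟨σ, τ, h1, h2, h3⟩ := mem_S2.mp hδ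
      exact ⟨(σ, τ), Finset.mem_filter.mpr ⟨Finset.mem_product.mpr ⟨h1, h2⟩, h3⟩⟩
    obtain ⟨⟨σ, τ⟩, hpm, hval⟩ := Finset.exists_mem_eq_sup _ hne
      (fun p : ℂ × ℂ => b.rootMultiplicity p.1 + c.rootMultiplicity p.2 - 1)
    rw [Finset.mem_filter, Finset.mem_product] at hpm
    have h1 := one_le_mult ha hρ
    have h2 := one_le_mult hb hpm.1.1
    have h3 := one_le_mult hc hpm.1.2
    have hv : M2 b c δ = b.rootMultiplicity σ + c.rootMultiplicity τ - 1 := hval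
    have hle := le_M3 hρ hpm.1.1 hpm.1.2 (γ := γ)
      (by rw [add_assoc, show (σ, τ).1 + (σ, τ).2 = δ from hpm.2]; exact hsum)
    rw [rootMultiplicity_pstar]
    dsimp only at *;
    omega
  · apply Finset.sup_le
    rintro ⟨⟨ρ, σ⟩, τ⟩ hm
    rw [Finset.mem_filter, Finset.mem_product] at hm
    obtain ⟨⟨hab, h3⟩, hsum⟩ := hm
    rw [Finset.mem_product] at hab
    have m1 := one_le_mult ha hab.1
    have m2 := one_le_mult hb hab.2
    have m3 := one_le_mult hc h3
    have hM := le_M2 hab.2 h3 (rfl : (σ, τ).1 + (σ, τ).2 = σ + τ)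
    have hle := le_M2 (b := pstar b c)
      (ρ := ρ) (σ := σ + τ) (γ := γ)
      hab.1
      (by rw [toFinset_roots_pstar hb hc]
          exact mem_S2.mpr ⟨σ, τ, hab.2, h3, rfl⟩)
      (by rw [← add_assoc]; exact hsum)
    rw [rootMultiplicity_pstar] at hle
    dsimp only at *;
    omega

end Aux

open Polynomial in
open scoped Classical in
/-- The star operation is commutative and associative on nonzero
polynomials over `ℂ`. -/
theorem stmt7 (a b c : Polynomial ℂ) (ha : a ≠ 0) (hb : b ≠ 0) (hc : c ≠ 0) :
    pstar a b = pstar b a ∧ pstar (pstar a b) c = pstar a (pstar b c) := by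
  constructor
  · rw [pstar_eq, pstar_eq, S2_comm]
    exact Finset.prod_congr rfl fun γ _ => by rw [M2_comm]
  · rw [pstar_eq (pstar a b) c, pstar_eq a (pstar b c), S2_pstar_left ha hb,
      S2_pstar_right hb hc]
    exact Finset.prod_congr rfl fun γ _ => by
      rw [M2_pstar_left ha hb hc, M2_pstar_right ha hb hc]
end
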